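/- Let G = (V,E) be a hypergraph, let w ∈ V, let f be a nonempty set of nodes disjoint from V, and let G' = (V',E') be the hypergraph obtained from G by expanding w to f. Let A(x,u) ≤ b be an extended formulation of MP(G), with original variables x ∈ ℝ^{V⊎E} and extended variables u ∈ ℝ^U (i.e., MP(G) = { x : ∃ u with A(x,u) ≤ b }). Let Cy ≤ d be the standard linearization system of the edge f in variables y ∈ ℝ^{f⊎{f}}: y_f ≥ Σ_{v∈f} y_v − |f| + 1; y_f ≤ y_v for all v ∈ f; y_f ≥ 0; y_v ≤ 1 for all v ∈ f. Then the system obtained from A(x,u) ≤ b and Cy ≤ d by renaming x_w → z_f, x_v → z_v (v ∈ V\{w}), x_e → z_e (e ∈ E, w ∉ e), x_e → z_{(e\{w})⊎f} (e ∈ E, w ∈ e) in the first system, and y_f → z_f, y_v → z_v (v ∈ f) in the second, is an extended formulation of MP(G') with original variables z ∈ ℝ^{V'⊎E'} and extended variables u ∈ ℝ^U; that is, MP(G') = { z ∈ ℝ^{V'⊎E'} : ∃ u ∈ ℝ^U with A(z,u) ≤ b and Cz ≤ d after these renamings }. -/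

import Mathlib

open Finset

namespace BPO

variable {N : Type*} [DecidableEq N]

/-- Coordinate index set of `ℝ^{V ∪ E}`: one coordinate for each edge, and one
coordinate (labelled by the corresponding singleton) for each node. -/
def coords (V : Finset N) (E : Finset (Finset N)) : Finset (Finset N) :=
  E ∪ V.image fun v => {v}

/-- A point of `ℝ^{V ∪ E}`. -/
abbrev Pt (V : Finset N) (E : Finset (Finset N)) : Type _ :=
  {p : Finset N // p ∈ coords V E} → ℝ

/-- Evaluate a coordinate of a point, with the convention `z_∅ = 1`.
For a node `v`, the coordinate `z_v` is `ev z {v}`. -/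
noncomputable def ev {V : Finset N} {E : Finset (Finset N)} (z : Pt V E)
    (p : Finset N) : ℝ :=
  if h : p ∈ coords V E then z ⟨p, h⟩ else if p = ∅ then 1 else 0

/-- The multilinear set `S(G)`: binary points with `z_e = ∏_{v ∈ e} z_v`. -/
def mlSet (V : Finset N) (E : Finset (Finset N)) : Set (Pt V E) :=
  { z | (∀ p, z p = 0 ∨ z p = 1) ∧ ∀ e ∈ E, ev z e = ∏ v ∈ e, ev z {v} }

/-- The multilinear polytope `MP(G)`. -/
noncomputable def MP (V : Finset N) (E : Finset (Finset N)) : Set (Pt V E) :=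
  convexHull ℝ (mlSet V E)

/-- The completion `cl(E) = { f ⊆ e : |f| ≥ 2, e ∈ E }`. -/
def clE (E : Finset (Finset N)) : Finset (Finset N) :=
  (E.biUnion Finset.powerset).filter fun g => 2 ≤ g.card

/-- The set of maximal edges of `E`. -/
def maxEdges (E : Finset (Finset N)) : Finset (Finset N) :=
  E.filter fun e => ∀ e' ∈ E, e ⊆ e' → e = e'

/-- The linear function `ψ(U, e)`. -/
noncomputable def psi {V : Finset N} {E : Finset (Finset N)} (z : Pt V E)
    (U e : Finset N) : ℝ :=
  ∑ W ∈ U.powerset, (if Even W.card then (1 : ℝ) else -1) * ev z ((e \ U) ∪ W)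

/-- The complete edge relaxation constraints (`ψ(U,e) ≥ 0` for `U ⊆ e`, `e` a
maximal edge of `E`), imposed on the coordinate space `ℝ^{V ∪ F}`. -/
noncomputable def cerSet (V : Finset N) (E F : Finset (Finset N)) : Set (Pt V F) :=
  { z | ∀ e ∈ maxEdges E, ∀ U ⊆ e, 0 ≤ psi z U e }

/-- The complete edge relaxation `CER(G) ⊆ ℝ^{V ∪ cl(E)}`. -/
noncomputable def CER (V : Finset N) (E : Finset (Finset N)) : Set (Pt V (clE E)) :=
  cerSet V E (clE E)

/-- Projection onto the coordinates of `ℝ^{V₂ ∪ E₂}`. -/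
noncomputable def res (V₂ : Finset N) (E₂ : Finset (Finset N)) {V₁ : Finset N}
    {E₁ : Finset (Finset N)} (z : Pt V₁ E₁) : Pt V₂ E₂ :=
  fun p => ev z p.1

/-- `CER(G)` is an extension of `MP(G)`: `MP(G)` is the image of `CER(G)` under
the projection of `ℝ^{V ∪ cl(E)}` onto `ℝ^{V ∪ E}`. -/
def IsExtension (V : Finset N) (E : Finset (Finset N)) : Prop :=
  MP V E = (fun z : Pt V (clE E) => res V E z) '' CER V E

/-- The running intersection property for the family `E`. -/
def RunningIntersection (E : Finset (Finset N)) : Prop :=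
  ∃ L : List (Finset N), L.Nodup ∧ L.toFinset = E ∧
    ∀ k, 0 < k → k < L.length →
      ∃ j < k, L.getD k ∅ ∩ (L.take k).foldr (· ∪ ·) ∅ ⊆ L.getD j ∅

/-- A hypergraph is α-acyclic if its edge set has the running intersection property. -/
def AlphaAcyclic (E : Finset (Finset N)) : Prop := RunningIntersection E

/-- `s_i = e_i ∩ e_{i+1}` for a cyclic sequence `e_1, …, e_ℓ, e_{ℓ+1} = e_1`. -/
def cycS (c : ℕ → Finset N) (ℓ i : ℕ) : Finset N :=
  c i ∩ c (if i = ℓ then 1 else i + 1)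

/-- A simple cycle `e_1, …, e_ℓ, e_{ℓ+1} = e_1` of length `ℓ`. -/
def IsSimpleCycle (E : Finset (Finset N)) (ℓ : ℕ) (c : ℕ → Finset N) : Prop :=
  3 ≤ ℓ ∧ (∀ i, 1 ≤ i → i ≤ ℓ → c i ∈ E) ∧
    ∀ i j k, 1 ≤ i → i < j → j < k → k ≤ ℓ → ∀ e ∈ E,
      ((cycS c ℓ i ∪ cycS c ℓ j ∪ cycS c ℓ k) \ e).Nonempty

/-- An α-cycle `e_1, …, e_ℓ, e_{ℓ+1} = e_1` of length `ℓ`. -/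
def IsAlphaCycle (E : Finset (Finset N)) (ℓ : ℕ) (c : ℕ → Finset N) : Prop :=
  3 ≤ ℓ ∧ (∀ i, 1 ≤ i → i ≤ ℓ → c i ∈ E) ∧
    (∀ i j, 1 ≤ i → i ≤ ℓ → 1 ≤ j → j ≤ ℓ → i ≠ j → (c i \ c j).Nonempty) ∧
    ∀ i, 1 ≤ i → i ≤ ℓ → ∀ e ∈ E,
      ((cycS c ℓ (if i = 1 then ℓ else i - 1) ∪ cycS c ℓ i ∪
        cycS c ℓ (if i = ℓ then 1 else i + 1)) \ e).Nonempty

/-- A chordless α-cycle: no subsequence `e_i, …, e_j, ẽ, e_i` is an α-cycle. -/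
def Chordless (E : Finset (Finset N)) (ℓ : ℕ) (c : ℕ → Finset N) : Prop :=
  ∀ i j, 1 ≤ i → i < j → j ≤ ℓ → j - i ≤ ℓ - 3 →
    ∀ g ∈ E, (∀ k, i ≤ k → k ≤ j → g ≠ c k) →
      ¬ IsAlphaCycle E (j - i + 2) fun k => if k ≤ j - i + 1 then c (i + k - 1) else g

/-- The edge set `E_{V'}` of the subhypergraph induced by `W`. -/
def indE (E : Finset (Finset N)) (W : Finset N) : Finset (Finset N) :=
  (E.image fun e => e ∩ W).filter fun g => 2 ≤ g.card

/-- The edge set `E_{w→u}` obtained by contracting `w` to `u`. -/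
def contrE (E : Finset (Finset N)) (u w : N) : Finset (Finset N) :=
  E.filter (fun e => w ∉ e) ∪
    (E.filter fun e => w ∈ e ∧ e ≠ {u, w}).image fun e => e.erase w ∪ {u}

/-- The edge set `E'` obtained by expanding `w` to `f`. -/
def expE (E : Finset (Finset N)) (w : N) (f : Finset N) : Finset (Finset N) :=
  insert f
    (E.filter (fun e => w ∉ e) ∪ (E.filter fun e => w ∈ e).image fun e => e.erase w ∪ f)

/-- The coordinate renaming `x_w → z_f`, `x_v → z_v`, `x_e → z_e` (`w ∉ e`),
`x_e → z_{(e∖{w}) ⊎ f}` (`w ∈ e`) used in the expansion operation. -/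
def expRen (w : N) (f : Finset N) (p : Finset N) : Finset N :=
  if p = {w} then f else if w ∈ p then p.erase w ∪ f else p

/-!
Read a point `z` of `ℝ^{V' ∪ E'}` as the pair `(x, y)`, where `x = z ∘ expRen` lives on `G`
and `y = ((z_v)_{v ∈ f}, z_f)` lives on the single edge `f`. This linear map is injective and
identifies the binary points of `G'` with the pairs of binary points of `G` and of `f` that agree
on `x_w = y_f`. Two convex combinations of such binary points with the same mean value of this
shared binary coordinate can be coupled, so `MP(G')` is exactly the set of `z` with `x ∈ MP(G)`
and `y ∈ MP(f)`. Finally `MP(f)` is the standard linearization: a feasible `(a, t)` is `t` times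
the all-ones vertex plus `1 - t` times a cube point `b` with `∑ (1 - b_v) ≥ 1`, and such a `b` is
an average of cube points having a zero coordinate.
-/

theorem exists_coupling {ι κ α : Type*} [Fintype ι] [Fintype κ] [DecidableEq α]
    (l : ι → ℝ) (m : κ → ℝ) (p : ι → α) (q : κ → α) (hl : ∀ i, 0 ≤ l i) (hm : ∀ j, 0 ≤ m j)
    (h : ∀ c, ∑ i with p i = c, l i = ∑ j with q j = c, m j) :
    ∃ ν : ι → κ → ℝ, (∀ i j, 0 ≤ ν i j) ∧ (∀ i, ∑ j, ν i j = l i) ∧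
      (∀ j, ∑ i, ν i j = m j) ∧ ∀ i j, ν i j ≠ 0 → p i = q j := by
  set M : α → ℝ := fun c => ∑ j with q j = c, m j
  have hlM (i : ι) (h0 : M (p i) = 0) : l i = 0 := by
    have : l i ≤ ∑ i' with p i' = p i, l i' := single_le_sum (fun i' _ => hl i') (by simp)
    linarith [h (p i), hl i]
  have hmM (j : κ) (h0 : M (q j) = 0) : m j = 0 := by
    have : m j ≤ M (q j) := single_le_sum (fun j' _ => hm j') (by simp)
    linarith [hm j]
  -- within each fibre of the labels, `l` and `m` are coupled independently
  refine ⟨fun i j => if p i = q j then l i * m j / M (q j) else 0, fun i j => ?_, fun i => ?_,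
    fun j => ?_, fun i j hij => ?_⟩
  · dsimp only
    split_ifs
    · exact div_nonneg (mul_nonneg (hl i) (hm j)) (sum_nonneg fun j' _ => hm j')
    · exact le_rfl
  · rw [← sum_filter, sum_congr rfl fun j hj => by rw [← (mem_filter.1 hj).2], ← sum_div,
      ← mul_sum]
    simp_rw [eq_comm (a := p i)]
    exact mul_div_cancel_of_imp (hlM i)
  · rw [← sum_filter, ← sum_div, ← sum_mul, h]
    exact mul_div_cancel_left_of_imp (hmM j)
  · by_contra hne
    exact hij (if_neg hne)

theorem sum_filter_eq_of_binary {ι : Type*} [Fintype ι] (l s : ι → ℝ) (hl : ∑ i, l i = 1)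
    (hs : ∀ i, s i = 0 ∨ s i = 1) (c : ℝ) :
    ∑ i with s i = c, l i =
      if c = 1 then ∑ i, l i * s i else if c = 0 then 1 - ∑ i, l i * s i else 0 := by
  rw [sum_filter]
  split_ifs with h1 h0
  · refine sum_congr rfl fun i _ => ?_
    rcases hs i with h | h <;> simp [h, h1]
  · rw [← hl, ← sum_sub_distrib]
    refine sum_congr rfl fun i _ => ?_
    rcases hs i with h | h <;> simp [h, h0]
  · refine sum_eq_zero fun i _ => if_neg ?_
    rcases hs i with h | h <;> simp [h, Ne.symm h0, Ne.symm h1]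

theorem mk_mem_convexHull_of_binary {E F : Type*} [AddCommGroup E] [Module ℝ E]
    [AddCommGroup F] [Module ℝ F] {A : Set E} {B : Set F} (φ : E →ₗ[ℝ] ℝ) (ψ : F →ₗ[ℝ] ℝ)
    (hA : ∀ a ∈ A, φ a = 0 ∨ φ a = 1) (hB : ∀ b ∈ B, ψ b = 0 ∨ ψ b = 1) {x : E} {y : F}
    (hx : x ∈ convexHull ℝ A) (hy : y ∈ convexHull ℝ B) (hxy : φ x = ψ y) :
    (x, y) ∈ convexHull ℝ {p : E × F | p.1 ∈ A ∧ p.2 ∈ B ∧ φ p.1 = ψ p.2} := by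
  classical
  obtain ⟨ι, _, l, a, hl0, hl1, ha, rfl⟩ := mem_convexHull_iff_exists_fintype.1 hx
  obtain ⟨κ, _, m, b, hm0, hm1, hb, rfl⟩ := mem_convexHull_iff_exists_fintype.1 hy
  have hmass : ∀ c, ∑ i with φ (a i) = c, l i = ∑ j with ψ (b j) = c, m j := by
    intro c
    rw [sum_filter_eq_of_binary l _ hl1 (fun i => hA _ (ha i)),
      sum_filter_eq_of_binary m _ hm1 (fun j => hB _ (hb j))]
    simp only [map_sum, map_smul, smul_eq_mul] at hxy
    rw [hxy]
  obtain ⟨ν, hν0, hνl, hνm, hνsupp⟩ := exists_coupling l m _ _ hl0 hm0 hmass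
  set t := univ.filter fun p : ι × κ => ν p.1 p.2 ≠ 0
  have hν1 : ∑ p ∈ t, ν p.1 p.2 = 1 := by
    rw [sum_filter_ne_zero, Fintype.sum_prod_type, ← hl1]
    exact sum_congr rfl fun i _ => hνl i
  have hcm : ∑ p ∈ t, ν p.1 p.2 • (a p.1, b p.2) = (∑ i, l i • a i, ∑ j, m j • b j) := by
    rw [sum_filter_of_ne fun p _ h => left_ne_zero_of_smul h]
    ext
    · simp_rw [Prod.fst_sum, Prod.smul_mk, Fintype.sum_prod_type, ← sum_smul, hνl]
    · simp_rw [Prod.snd_sum, Prod.smul_mk, Fintype.sum_prod_type, sum_comm (γ := ι),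
        ← sum_smul, hνm]
  rw [← hcm, ← centerMass_eq_of_sum_1 _ _ hν1]
  exact t.centerMass_mem_convexHull (fun p _ => hν0 _ _) (by simp [hν1]) fun p hp =>
    ⟨ha _, hb _, hνsupp _ _ (mem_filter.1 hp).2⟩

section EdgePolytope

variable (ι : Type*) [Fintype ι]

def standardLinearization : Set ((ι → ℝ) × ℝ) :=
  {y | (∑ i, y.1 i) - Fintype.card ι + 1 ≤ y.2 ∧ (∀ i, y.2 ≤ y.1 i) ∧ 0 ≤ y.2 ∧
    ∀ i, y.1 i ≤ 1}

def edgeMlSet : Set ((ι → ℝ) × ℝ) :=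
  {y | (∀ i, y.1 i = 0 ∨ y.1 i = 1) ∧ y.2 = ∏ i, y.1 i}

variable {ι}

theorem convex_standardLinearization : Convex ℝ (standardLinearization ι) := by
  rintro ⟨a, t⟩ ⟨h1, h2, h3, h4⟩ ⟨a', t'⟩ ⟨h1', h2', h3', h4'⟩ μ ν hμ hν hμν
  simp only [Prod.smul_mk, Prod.mk_add_mk, standardLinearization, Set.mem_ofPred_eq, Pi.add_apply,
    Pi.smul_apply, smul_eq_mul, sum_add_distrib, ← mul_sum] at *
  refine ⟨?_, fun i => ?_, by positivity, fun i => ?_⟩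
  · nlinarith
  · nlinarith [h2 i, h2' i]
  · nlinarith [h4 i, h4' i]

theorem edgeMlSet_subset_standardLinearization : edgeMlSet ι ⊆ standardLinearization ι := by
  classical
  rintro ⟨σ, t⟩ ⟨hσ, ht⟩
  dsimp only at hσ ht
  subst ht
  have hσ0 : ∀ i, 0 ≤ σ i := fun i => by rcases hσ i with h | h <;> simp [h]
  have hσ1 : ∀ i, σ i ≤ 1 := fun i => by rcases hσ i with h | h <;> simp [h]
  refine ⟨?_, fun i => ?_, prod_nonneg fun i _ => hσ0 i, hσ1⟩
  · by_cases h : ∀ i, σ i = 1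
    · simp [h]
    obtain ⟨i, hi⟩ := not_forall.1 h
    have hi : σ i = 0 := (hσ i).resolve_right hi
    have : ∑ j, σ j ≤ ∑ j, (1 - if j = i then (1 : ℝ) else 0) :=
      sum_le_sum fun j _ => by split_ifs with hj <;> simp [hj, hi, hσ1]
    simp only [sum_sub_distrib, sum_ite_eq', mem_univ, if_true, sum_const, card_univ,
      nsmul_eq_mul, mul_one] at this
    simp only [prod_eq_zero (mem_univ i) hi]
    linarith
  · dsimp only
    rcases hσ i with h | h
    · rw [prod_eq_zero (mem_univ i) h, h]
    · rw [h]
      exact prod_le_one (fun j _ => hσ0 j) fun j _ => hσ1 j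

theorem mem_convexHull_binary_of_eq_zero {x : ι → ℝ} (hx0 : ∀ j, 0 ≤ x j)
    (hx1 : ∀ j, x j ≤ 1) {i : ι} (hi : x i = 0) :
    x ∈ convexHull ℝ {σ : ι → ℝ | (∀ j, σ j = 0 ∨ σ j = 1) ∧ σ i = 0} := by
  classical
  have hpi : x ∈ convexHull ℝ (Set.univ.pi fun j => if j = i then {0} else {0, 1}) := by
    refine mem_convexHull_pi fun j _ => ?_
    split_ifs with hj
    · subst hj
      simp [hi]
    · rw [convexHull_pair, segment_eq_Icc zero_le_one]
      exact ⟨hx0 j, hx1 j⟩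
  refine convexHull_mono ?_ hpi
  intro σ hσ
  refine ⟨fun j => ?_, ?_⟩
  · have := hσ j (Set.mem_univ j)
    dsimp only at this
    split_ifs at this <;> simp_all
  · simpa using hσ i (Set.mem_univ i)

theorem mem_convexHull_binary_of_one_le_sum {b : ι → ℝ} (hb0 : ∀ j, 0 ≤ b j)
    (hb1 : ∀ j, b j ≤ 1) (hsum : 1 ≤ ∑ j, (1 - b j)) :
    b ∈ convexHull ℝ {σ : ι → ℝ | (∀ j, σ j = 0 ∨ σ j = 1) ∧ ∃ i, σ i = 0} := by
  classical
  set d : ι → ℝ := fun j => 1 - b j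
  set D := ∑ j, d j
  have hd0 : ∀ j, 0 ≤ d j := fun j => sub_nonneg.2 (hb1 j)
  have hdD : ∀ j, d j ≤ D := fun j => single_le_sum (fun k _ => hd0 k) (mem_univ j)
  have hD0 : D ≠ 0 := by positivity
  -- `b` is the average, with weights `d i / D`, of the points `x` with coordinate `i` set to `0`
  set x : ι → ℝ := fun j => D * b j / (D - d j)
  have hx0 : ∀ j, 0 ≤ x j := fun j =>
    div_nonneg (mul_nonneg (by positivity) (hb0 j)) (sub_nonneg.2 (hdD j))
  have hx1 : ∀ j, x j ≤ 1 := fun j => by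
    refine div_le_one_of_le₀ ?_ (sub_nonneg.2 (hdD j))
    nlinarith [hd0 j]
  have hb : b = ∑ i, (d i / D) • Function.update x i 0 := by
    funext j
    simp only [Finset.sum_apply, Pi.smul_apply, Function.update_apply, smul_eq_mul,
      mul_ite, mul_zero]
    rw [sum_ite, sum_const_zero, zero_add, ← sum_mul, ← sum_div]
    simp only [← ne_eq, filter_ne, sum_erase_eq_sub (mem_univ j)]
    change b j = (D - d j) / D * (D * b j / (D - d j))
    by_cases hDd : D - d j = 0
    · have : b j = 0 := by linarith [hb0 j, hdD j]
      simp [hDd, this]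
    · field_simp [x]
  rw [hb]
  refine (convex_convexHull ℝ _).sum_mem (fun i _ => div_nonneg (hd0 i) (by positivity))
    (by rw [← sum_div, div_self hD0]) fun i _ => ?_
  refine convexHull_mono (fun σ hσ => ?_)
    (mem_convexHull_binary_of_eq_zero (fun j => ?_) (fun j => ?_) (Function.update_self i 0 x))
  · exact ⟨hσ.1, i, hσ.2⟩
  all_goals
    rw [Function.update_apply]
    split_ifs
  exacts [le_rfl, hx0 j, zero_le_one, hx1 j]

theorem standardLinearization_subset_convexHull [Nonempty ι] : standardLinearization ι ⊆ convexHull ℝ (edgeMlSet ι) := by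
  rintro ⟨a, t⟩ ⟨hsum, hta, ht0, ha1⟩
  dsimp only at hsum hta ht0 ha1
  have ht1 : t ≤ 1 := (hta (Classical.arbitrary ι)).trans (ha1 _)
  have htop : ((1 : ι → ℝ), (1 : ℝ)) ∈ edgeMlSet ι := ⟨fun _ => Or.inr rfl, by simp⟩
  rcases ht1.eq_or_lt with rfl | ht1
  · have : a = 1 := funext fun i => le_antisymm (ha1 i) (hta i)
    subst this
    exact subset_convexHull ℝ _ htop
  set b : ι → ℝ := fun i => (a i - t) / (1 - t)
  have hb : b ∈ convexHull ℝ {σ : ι → ℝ | (∀ j, σ j = 0 ∨ σ j = 1) ∧ ∃ i, σ i = 0} := by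
    refine mem_convexHull_binary_of_one_le_sum (fun j => ?_) (fun j => ?_) ?_
    · exact div_nonneg (sub_nonneg.2 (hta j)) (sub_nonneg.2 ht1.le)
    · exact div_le_one_of_le₀ (by linarith [ha1 j]) (sub_nonneg.2 ht1.le)
    · have : ∀ j, 1 - b j = (1 - a j) / (1 - t) := fun j => by
        have ht1' := (sub_pos.2 ht1).ne'
        simp only [b]
        field_simp
        ring
      simp only [this, ← sum_div, sum_sub_distrib, sum_const, card_univ, nsmul_eq_mul, mul_one]
      rw [le_div_iff₀ (sub_pos.2 ht1)]
      linarith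
  have hb0 : (b, (0 : ℝ)) ∈ convexHull ℝ (edgeMlSet ι) := by
    have := LinearMap.image_convexHull (LinearMap.inl ℝ (ι → ℝ) ℝ) _ ▸ Set.mem_image_of_mem _ hb
    refine convexHull_mono ?_ this
    rintro _ ⟨σ, ⟨hσ, i, hi⟩, rfl⟩
    exact ⟨hσ, (prod_eq_zero (mem_univ i) hi).symm⟩
  have : (a, t) = t • ((1 : ι → ℝ), (1 : ℝ)) + (1 - t) • (b, (0 : ℝ)) := by
    ext i
    · simp only [Prod.fst_add, Prod.smul_fst, Pi.add_apply, Pi.smul_apply, Pi.one_apply,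
        smul_eq_mul, b]
      field_simp [(sub_pos.2 ht1).ne']
      ring
    · simp
  rw [this]
  exact convex_convexHull ℝ _ (subset_convexHull ℝ _ htop) hb0 ht0 (sub_nonneg.2 ht1.le)
    (by ring)

theorem convexHull_edgeMlSet [Nonempty ι] : convexHull ℝ (edgeMlSet ι) = standardLinearization ι :=
  (convexHull_min edgeMlSet_subset_standardLinearization convex_standardLinearization).antisymm standardLinearization_subset_convexHull

end EdgePolytope

section MultilinearPoints

variable {V : Finset N} {E : Finset (Finset N)}

theorem ev_of_mem_coords (z : Pt V E) {p : Finset N} (hp : p ∈ coords V E) :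
    ev z p = z ⟨p, hp⟩ :=
  dif_pos hp

theorem edge_mem_coords {e : Finset N} (he : e ∈ E) : e ∈ coords V E :=
  mem_union_left _ he

theorem singleton_mem_coords {v : N} (hv : v ∈ V) : {v} ∈ coords V E :=
  mem_union_right _ (mem_image_of_mem _ hv)

theorem subset_of_mem_coords (hVsub : ∀ e ∈ E, e ⊆ V) {p : Finset N} (hp : p ∈ coords V E) :
    p ⊆ V := by
  rcases mem_union.1 hp with hp | hp
  · exact hVsub p hp
  · obtain ⟨v, hv, rfl⟩ := mem_image.1 hp
    exact singleton_subset_iff.2 hv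

theorem prod_binary {α : Type*} {s : Finset α} {τ : α → ℝ} (hτ : ∀ v ∈ s, τ v = 0 ∨ τ v = 1) :
    ∏ v ∈ s, τ v = 0 ∨ ∏ v ∈ s, τ v = 1 :=
  prod_induction τ (fun r => r = 0 ∨ r = 1)
    (by rintro a b (rfl | rfl) (rfl | rfl) <;> norm_num) (Or.inr rfl) hτ

theorem ev_binary {z : Pt V E} (hz : ∀ p, z p = 0 ∨ z p = 1) (p : Finset N) :
    ev z p = 0 ∨ ev z p = 1 := by
  unfold ev
  split_ifs
  exacts [hz _, Or.inr rfl, Or.inl rfl]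

variable (V E) in
def mlPoint (τ : N → ℝ) : Pt V E :=
  fun p => ∏ v ∈ p.1, τ v

theorem ev_mlPoint (τ : N → ℝ) {p : Finset N} (hp : p ∈ coords V E) :
    ev (mlPoint V E τ) p = ∏ v ∈ p, τ v :=
  dif_pos hp

theorem mlPoint_congr (hVsub : ∀ e ∈ E, e ⊆ V) {τ τ' : N → ℝ} (h : ∀ v ∈ V, τ v = τ' v) :
    mlPoint V E τ = mlPoint V E τ' :=
  funext fun p => prod_congr rfl fun v hv => h v (subset_of_mem_coords hVsub p.2 hv)

theorem mlPoint_mem_mlSet (hVsub : ∀ e ∈ E, e ⊆ V) {τ : N → ℝ} (hτ : ∀ v, τ v = 0 ∨ τ v = 1) :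
    mlPoint V E τ ∈ mlSet V E := by
  refine ⟨fun p => prod_binary fun v _ => hτ v, fun e he => ?_⟩
  rw [ev_mlPoint τ (edge_mem_coords he)]
  refine prod_congr rfl fun v hv => ?_
  rw [ev_mlPoint τ (singleton_mem_coords (hVsub e he hv)), prod_singleton]

theorem eq_mlPoint_of_mem_mlSet {z : Pt V E} (hz : z ∈ mlSet V E) :
    z = mlPoint V E fun v => ev z {v} := by
  funext ⟨p, hp⟩
  rw [← ev_of_mem_coords z hp]
  rcases mem_union.1 hp with he | hs
  · exact hz.2 p he
  · obtain ⟨v, -, rfl⟩ := mem_image.1 hs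
    exact (prod_singleton _ _).symm

end MultilinearPoints

section Expansion

variable {V : Finset N} {E : Finset (Finset N)} {w : N} {f : Finset N}

theorem expRen_singleton_self : expRen w f {w} = f := if_pos rfl

theorem expRen_of_mem {q : Finset N} (hw : w ∈ q) : expRen w f q = q.erase w ∪ f := by
  unfold expRen
  split_ifs with h
  · simp [h]
  · rfl

theorem expRen_of_notMem {q : Finset N} (hw : w ∉ q) : expRen w f q = q := by
  have hq : q ≠ {w} := by rintro rfl; exact hw (mem_singleton_self w)
  rw [expRen, if_neg hq, if_neg hw]

theorem self_mem_expE : f ∈ expE E w f := mem_insert_self _ _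

theorem mem_expE_iff {e : Finset N} :
    e ∈ expE E w f ↔ e = f ∨ (e ∈ E ∧ w ∉ e) ∨ ∃ e₀ ∈ E, w ∈ e₀ ∧ e₀.erase w ∪ f = e := by
  simp only [expE, mem_insert, mem_union, mem_filter, mem_image, and_assoc]

theorem expRen_mem_coords {q : Finset N} (hq : q ∈ coords V E) :
    expRen w f q ∈ coords (V.erase w ∪ f) (expE E w f) := by
  rcases mem_union.1 hq with he | hs
  · refine edge_mem_coords (mem_expE_iff.2 (Or.inr ?_))
    by_cases hw : w ∈ q
    · exact Or.inr ⟨q, he, hw, (expRen_of_mem hw).symm⟩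
    · exact Or.inl ⟨(expRen_of_notMem hw).symm ▸ he, by rwa [expRen_of_notMem hw]⟩
  · obtain ⟨v, hv, rfl⟩ := mem_image.1 hs
    by_cases hvw : v = w
    · subst hvw
      rw [expRen_singleton_self]
      exact edge_mem_coords self_mem_expE
    · rw [expRen_of_notMem (by simpa [eq_comm] using hvw)]
      exact singleton_mem_coords (mem_union_left _ (mem_erase.2 ⟨hvw, hv⟩))

theorem expE_subset (hVsub : ∀ e ∈ E, e ⊆ V) : ∀ e ∈ expE E w f, e ⊆ V.erase w ∪ f := by
  intro e he
  rcases mem_expE_iff.1 he with rfl | ⟨he, hwe⟩ | ⟨e₀, he₀, -, rfl⟩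
  · exact subset_union_right
  · exact fun v hv => mem_union_left _ (mem_erase.2 ⟨fun h => hwe (h ▸ hv), hVsub e he hv⟩)
  · exact union_subset_union (erase_subset_erase w (hVsub e₀ he₀)) subset_rfl

variable (V E w f) in
def expPullback : Pt (V.erase w ∪ f) (expE E w f) →ₗ[ℝ] Pt V E :=
  LinearMap.funLeft ℝ ℝ fun q => ⟨expRen w f q, expRen_mem_coords q.2⟩

theorem expPullback_apply (z : Pt (V.erase w ∪ f) (expE E w f)) (q : {q // q ∈ coords V E}) :
    expPullback V E w f z q = ev z (expRen w f q) :=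
  (ev_of_mem_coords z _).symm

def edgeCoords (hf : f ∈ E) (hfV : f ⊆ V) : Pt V E →ₗ[ℝ] (f → ℝ) × ℝ :=
  (LinearMap.funLeft ℝ ℝ fun v : f => ⟨{v.1}, singleton_mem_coords (hfV v.2)⟩).prod
    (LinearMap.proj ⟨f, edge_mem_coords hf⟩)

theorem edgeCoords_apply (hf : f ∈ E) (hfV : f ⊆ V) (z : Pt V E) :
    edgeCoords hf hfV z = (fun v => ev z {v.1}, ev z f) := by
  refine Prod.ext (funext fun v => ?_) ?_ <;> exact (ev_of_mem_coords z _).symm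

theorem edgeCoords_mlPoint (hf : f ∈ E) (hfV : f ⊆ V) (τ : N → ℝ) :
    edgeCoords hf hfV (mlPoint V E τ) = (fun v : f => τ v, ∏ v ∈ f, τ v) := by
  rw [edgeCoords_apply, ev_mlPoint τ (edge_mem_coords hf)]
  congr
  funext v
  rw [ev_mlPoint τ (singleton_mem_coords (hfV v.2)), prod_singleton]

theorem edgeCoords_mem_edgeMlSet (hf : f ∈ E) (hfV : f ⊆ V) {z : Pt V E}
    (hz : z ∈ mlSet V E) : edgeCoords hf hfV z ∈ edgeMlSet f := by
  rw [eq_mlPoint_of_mem_mlSet hz, edgeCoords_mlPoint]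
  exact ⟨fun v => ev_binary hz.1 _, (prod_coe_sort f _).symm⟩

theorem prod_expRen {q : Finset N} (hq : Disjoint q f) (τ : N → ℝ) :
    ∏ v ∈ expRen w f q, τ v = ∏ v ∈ q, Function.update τ w (∏ u ∈ f, τ u) v := by
  have hrest : ∏ v ∈ q.erase w, Function.update τ w (∏ u ∈ f, τ u) v = ∏ v ∈ q.erase w, τ v :=
    prod_congr rfl fun v hv => Function.update_of_ne (ne_of_mem_erase hv) _ _
  by_cases hw : w ∈ q
  · rw [expRen_of_mem hw, prod_union (disjoint_of_subset_left (erase_subset w q) hq),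
      ← mul_prod_erase q _ hw, hrest, Function.update_self, mul_comm]
  · rw [expRen_of_notMem hw, ← erase_eq_of_notMem hw, hrest]

theorem expPullback_mlPoint (hVsub : ∀ e ∈ E, e ⊆ V) (hdisj : Disjoint f V) (τ : N → ℝ) :
    expPullback V E w f (mlPoint _ _ τ) = mlPoint V E (Function.update τ w (∏ u ∈ f, τ u)) :=
  funext fun q => prod_expRen
    (disjoint_of_subset_left (subset_of_mem_coords hVsub q.2) hdisj.symm) τ

theorem expPullback_mem_mlSet (hVsub : ∀ e ∈ E, e ⊆ V) (hdisj : Disjoint f V)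
    {z : Pt (V.erase w ∪ f) (expE E w f)} (hz : z ∈ mlSet _ _) :
    expPullback V E w f z ∈ mlSet V E := by
  rw [eq_mlPoint_of_mem_mlSet hz, expPullback_mlPoint hVsub hdisj]
  refine mlPoint_mem_mlSet hVsub fun v => ?_
  rw [Function.update_apply]
  split_ifs
  exacts [prod_binary fun u _ => ev_binary hz.1 _, ev_binary hz.1 _]

theorem expPullback_singleton_self (hw : w ∈ V) (z : Pt (V.erase w ∪ f) (expE E w f)) :
    expPullback V E w f z ⟨{w}, singleton_mem_coords hw⟩ =
      (edgeCoords self_mem_expE subset_union_right z).2 := by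
  rw [expPullback_apply, edgeCoords_apply, expRen_singleton_self]

theorem exists_mlSet_expE (hVsub : ∀ e ∈ E, e ⊆ V) (hw : w ∈ V) (hdisj : Disjoint f V)
    {χ : Pt V E} (hχ : χ ∈ mlSet V E) {y : (f → ℝ) × ℝ} (hy : y ∈ edgeMlSet f)
    (hχy : χ ⟨{w}, singleton_mem_coords hw⟩ = y.2) :
    ∃ z ∈ mlSet (V.erase w ∪ f) (expE E w f), expPullback V E w f z = χ ∧
      edgeCoords self_mem_expE subset_union_right z = y := by
  set τ : N → ℝ := fun v => if h : v ∈ f then y.1 ⟨v, h⟩ else ev χ {v}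
  have hτf : ∏ v ∈ f, τ v = y.2 := by
    rw [hy.2, ← prod_coe_sort f]
    exact prod_congr rfl fun v _ => dif_pos v.2
  refine ⟨mlPoint _ _ τ, mlPoint_mem_mlSet (expE_subset hVsub) fun v => ?_, ?_, ?_⟩
  · unfold τ
    split_ifs
    exacts [hy.1 _, ev_binary hχ.1 _]
  · rw [expPullback_mlPoint hVsub hdisj, eq_mlPoint_of_mem_mlSet hχ]
    refine mlPoint_congr hVsub fun v hv => ?_
    rw [Function.update_apply]
    split_ifs with hvw
    · rw [hτf, hvw, ← hχy, ev_of_mem_coords]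
    · exact dif_neg (disjoint_right.1 hdisj hv)
  · rw [edgeCoords_mlPoint, hτf]
    exact Prod.ext (funext fun v => dif_pos v.2) rfl

theorem mem_coords_expE {p : Finset N} (hp : p ∈ coords (V.erase w ∪ f) (expE E w f)) :
    (∃ q ∈ coords V E, expRen w f q = p) ∨ p = f ∨ ∃ v ∈ f, p = {v} := by
  rcases mem_union.1 hp with he | hs
  · rcases mem_expE_iff.1 he with rfl | ⟨he, hwp⟩ | ⟨e₀, he₀, hw, rfl⟩
    · exact Or.inr (Or.inl rfl)
    · exact Or.inl ⟨p, edge_mem_coords he, expRen_of_notMem hwp⟩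
    · exact Or.inl ⟨e₀, edge_mem_coords he₀, expRen_of_mem hw⟩
  · obtain ⟨v, hv, rfl⟩ := mem_image.1 hs
    rcases mem_union.1 hv with hv | hv
    · obtain ⟨hvw, hv⟩ := mem_erase.1 hv
      exact Or.inl ⟨{v}, singleton_mem_coords hv,
        expRen_of_notMem (by simpa [eq_comm] using hvw)⟩
    · exact Or.inr (Or.inr ⟨v, hv, rfl⟩)

theorem injective_expPullback_prod_edgeCoords :
    Function.Injective
      ((expPullback V E w f).prod (edgeCoords self_mem_expE subset_union_right)) := by
  intro z₁ z₂ h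
  have hx : expPullback V E w f z₁ = expPullback V E w f z₂ := congrArg Prod.fst h
  have hyf := congrArg Prod.snd h
  simp only [LinearMap.prod_apply, Function.prod, edgeCoords_apply, Prod.mk.injEq] at hyf
  obtain ⟨hy, hf⟩ := hyf
  have hev : ∀ p ∈ coords (V.erase w ∪ f) (expE E w f), ev z₁ p = ev z₂ p := by
    intro p hp
    rcases mem_coords_expE hp with ⟨q, hq, rfl⟩ | rfl | ⟨v, hv, rfl⟩
    · rw [← expPullback_apply z₁ ⟨q, hq⟩, hx, expPullback_apply]
    · exact hf
    · exact congrFun hy ⟨v, hv⟩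
  funext ⟨p, hp⟩
  rw [← ev_of_mem_coords z₁ hp, ← ev_of_mem_coords z₂ hp, hev p hp]

theorem MP_expE (hVsub : ∀ e ∈ E, e ⊆ V) (hw : w ∈ V) (hdisj : Disjoint f V) :
    MP (V.erase w ∪ f) (expE E w f) = {z | expPullback V E w f z ∈ MP V E ∧
      edgeCoords self_mem_expE subset_union_right z ∈ convexHull ℝ (edgeMlSet f)} := by
  set Φ := (expPullback V E w f).prod (edgeCoords self_mem_expE subset_union_right)
  set φ : Pt V E →ₗ[ℝ] ℝ := LinearMap.proj ⟨{w}, singleton_mem_coords hw⟩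
  have hΦ : Φ '' mlSet _ _ =
      {x | x.1 ∈ mlSet V E ∧ x.2 ∈ edgeMlSet f ∧ φ x.1 = LinearMap.snd ℝ _ _ x.2} := by
    ext x
    constructor
    · rintro ⟨z, hz, rfl⟩
      exact ⟨expPullback_mem_mlSet hVsub hdisj hz, edgeCoords_mem_edgeMlSet _ _ hz,
        expPullback_singleton_self hw z⟩
    · rintro ⟨hχ, hy, hχy⟩
      obtain ⟨z, hz, h1, h2⟩ := exists_mlSet_expE hVsub hw hdisj hχ hy hχy
      exact ⟨z, hz, Prod.ext h1 h2⟩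
  ext z
  constructor
  · intro hz
    have hsub : Φ '' mlSet _ _ ⊆ mlSet V E ×ˢ edgeMlSet f := by
      rw [hΦ]
      exact fun x hx => ⟨hx.1, hx.2.1⟩
    have := convexHull_mono hsub ((Φ.image_convexHull _).subset ⟨z, hz, rfl⟩)
    rwa [convexHull_prod] at this
  · rintro ⟨h1, h2⟩
    have := mk_mem_convexHull_of_binary φ (LinearMap.snd ℝ (f → ℝ) ℝ) (fun χ hχ => hχ.1 _)
      (fun y hy => by rw [LinearMap.snd_apply, hy.2]; exact prod_binary fun v _ => hy.1 v)
      h1 h2 (expPullback_singleton_self hw z)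
    rw [← hΦ, ← Φ.image_convexHull] at this
    obtain ⟨z', hz', hzz'⟩ := this
    exact injective_expPullback_prod_edgeCoords hzz' ▸ hz'

end Expansion

theorem stmt13_general {N : Type*} [DecidableEq N] (V : Finset N) (E : Finset (Finset N))
    (hVsub : ∀ e ∈ E, e ⊆ V)
    (w : N) (hw : w ∈ V) (f : Finset N) (hf : f.Nonempty) (hdisj : Disjoint f V)
    {ι U : Type*} [Fintype U]
    (A : ι → ({p : Finset N // p ∈ coords V E} ⊕ U) → ℝ) (b : ι → ℝ)
    (hEF : MP V E = { x | ∃ y : U → ℝ, ∀ i,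
      (∑ p : {p : Finset N // p ∈ coords V E}, A i (Sum.inl p) * x p) +
        (∑ u : U, A i (Sum.inr u) * y u) ≤ b i }) :
    MP (V.erase w ∪ f) (expE E w f) = { z | ∃ y : U → ℝ,
      (∀ i,
        (∑ p : {p : Finset N // p ∈ coords V E},
          A i (Sum.inl p) * ev z (expRen w f p.1)) +
          (∑ u : U, A i (Sum.inr u) * y u) ≤ b i) ∧
      ((∑ v ∈ f, ev z {v}) - (f.card : ℝ) + 1 ≤ ev z f) ∧
      (∀ v ∈ f, ev z f ≤ ev z {v}) ∧
      (0 ≤ ev z f) ∧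
      (∀ v ∈ f, ev z {v} ≤ 1) } := by
  have : Nonempty f := hf.coe_sort
  rw [MP_expE hVsub hw hdisj, convexHull_edgeMlSet, hEF]
  ext z
  simp only [Set.mem_ofPred_eq, expPullback_apply, edgeCoords_apply, standardLinearization,
    sum_coe_sort f fun v => ev z {v}, Fintype.card_coe, Subtype.forall, exists_and_right]

theorem stmt13 {N : Type*} [DecidableEq N] (V : Finset N) (E : Finset (Finset N))
    (hcard : ∀ e ∈ E, 2 ≤ e.card) (hVsub : ∀ e ∈ E, e ⊆ V)
    (hcover : ∀ v ∈ V, ∃ e ∈ E, v ∈ e)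
    (w : N) (hw : w ∈ V) (f : Finset N) (hf : f.Nonempty) (hdisj : Disjoint f V)
    {ι U : Type*} [Fintype ι] [Fintype U]
    (A : ι → ({p : Finset N // p ∈ coords V E} ⊕ U) → ℝ) (b : ι → ℝ)
    (hEF : MP V E = { x | ∃ y : U → ℝ, ∀ i,
      (∑ p : {p : Finset N // p ∈ coords V E}, A i (Sum.inl p) * x p) +
        (∑ u : U, A i (Sum.inr u) * y u) ≤ b i }) :
    MP (V.erase w ∪ f) (expE E w f) = { z | ∃ y : U → ℝ,
      (∀ i,
        (∑ p : {p : Finset N // p ∈ coords V E},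
          A i (Sum.inl p) * ev z (expRen w f p.1)) +
          (∑ u : U, A i (Sum.inr u) * y u) ≤ b i) ∧
      ((∑ v ∈ f, ev z {v}) - (f.card : ℝ) + 1 ≤ ev z f) ∧
      (∀ v ∈ f, ev z f ≤ ev z {v}) ∧
      (0 ≤ ev z f) ∧
      (∀ v ∈ f, ev z {v} ≤ 1) } :=
  stmt13_general V E hVsub w hw f hf hdisj A b hEF

end BPO
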